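/- arXiv:2111.00657 — 4 statements merged into one kernel-verified Lean document; each statement's English description precedes it below -/
import Mathlib

section
/- Let (R, t) be a rigid transformation with R ∈ SO(3), t ∈ ℝ³, let γ > 0, and suppose correspondences (p_i, q_i) and (p_j, q_j) satisfy ‖R p_i + t − q_i‖ ≤ γ and ‖R p_j + t − q_j‖ ≤ γ. Then |‖q_i − q_j‖ − ‖p_i − p_j‖| ≤ 2γ. -/
open scoped Matrix

lemma norm_mulVec_eq (R : Matrix (Fin 3) (Fin 3) ℝ)
    (hR : R ∈ Matrix.orthogonalGroup (Fin 3) ℝ) (x : EuclideanSpace ℝ (Fin 3)) :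
    ‖((WithLp.equiv 2 (Fin 3 → ℝ)).symm (R.mulVec x))‖ = ‖x‖ := by
  rw [Matrix.mem_orthogonalGroup_iff'] at hR
  have hRtr : R.transpose * R = 1 := by
    simpa [Matrix.star_eq_conjTranspose, Matrix.conjTranspose_eq_transpose_of_trivial] using hR
  set y : Fin 3 → ℝ := WithLp.equiv 2 (Fin 3 → ℝ) x with hy
  have key : (R.mulVec y) ⬝ᵥ (R.mulVec y) = y ⬝ᵥ y := by
    rw [Matrix.dotProduct_mulVec, ← Matrix.mulVec_transpose (A := R), Matrix.mulVec_mulVec, hRtr,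
      Matrix.one_mulVec]
  have h1 : ‖((WithLp.equiv 2 (Fin 3 → ℝ)).symm (R.mulVec y))‖ ^ 2
      = (R.mulVec y) ⬝ᵥ (R.mulVec y) := by
    rw [EuclideanSpace.norm_eq, Real.sq_sqrt (by positivity)]
    simp [dotProduct, Real.norm_eq_abs, sq_abs, sq]
  have h2 : ‖x‖ ^ 2 = y ⬝ᵥ y := by
    rw [EuclideanSpace.norm_eq, Real.sq_sqrt (by positivity)]
    simp [dotProduct, Real.norm_eq_abs, sq_abs, sq, hy]
  have heq : ‖((WithLp.equiv 2 (Fin 3 → ℝ)).symm (R.mulVec y))‖ ^ 2 = ‖x‖ ^ 2 := by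
    rw [h1, key, h2]
  have h5 : R.mulVec x = R.mulVec y := rfl
  rw [h5]
  nlinarith [norm_nonneg ((WithLp.equiv 2 (Fin 3 → ℝ)).symm (R.mulVec y)), norm_nonneg x, heq]

theorem stmt_4 (R : Matrix (Fin 3) (Fin 3) ℝ)
    (hR : R ∈ Matrix.orthogonalGroup (Fin 3) ℝ) (hdet : R.det = 1)
    (t : EuclideanSpace ℝ (Fin 3)) (γ : ℝ) (hγ : 0 < γ)
    (p₁ p₂ q₁ q₂ : EuclideanSpace ℝ (Fin 3))
    (h₁ : ‖((WithLp.equiv 2 (Fin 3 → ℝ)).symm (R.mulVec p₁)) + t - q₁‖ ≤ γ)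
    (h₂ : ‖((WithLp.equiv 2 (Fin 3 → ℝ)).symm (R.mulVec p₂)) + t - q₂‖ ≤ γ) :
    |‖q₁ - q₂‖ - ‖p₁ - p₂‖| ≤ 2 * γ := by
  set a := ((WithLp.equiv 2 (Fin 3 → ℝ)).symm (R.mulVec p₁)) + t - q₁
  set b := ((WithLp.equiv 2 (Fin 3 → ℝ)).symm (R.mulVec p₂)) + t - q₂
  have hRp : ‖p₁ - p₂‖ = ‖((WithLp.equiv 2 (Fin 3 → ℝ)).symm (R.mulVec p₁))
      - ((WithLp.equiv 2 (Fin 3 → ℝ)).symm (R.mulVec p₂))‖ := by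
    have : ((WithLp.equiv 2 (Fin 3 → ℝ)).symm (R.mulVec p₁))
        - ((WithLp.equiv 2 (Fin 3 → ℝ)).symm (R.mulVec p₂))
        = (WithLp.equiv 2 (Fin 3 → ℝ)).symm (R.mulVec (p₁ - p₂)) := by
      ext i
      simp [Matrix.mulVec, dotProduct, WithLp.equiv_symm_apply, PiLp.sub_apply,
        mul_sub, Finset.sum_sub_distrib]
    rw [this, norm_mulVec_eq R hR]
    rfl
  have hdiff : q₁ - q₂ = (((WithLp.equiv 2 (Fin 3 → ℝ)).symm (R.mulVec p₁))
      - ((WithLp.equiv 2 (Fin 3 → ℝ)).symm (R.mulVec p₂))) + (b - a) := by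
    simp [a, b]; abel
  have h3 := abs_norm_sub_norm_le (q₁ - q₂) (((WithLp.equiv 2 (Fin 3 → ℝ)).symm (R.mulVec p₁))
      - ((WithLp.equiv 2 (Fin 3 → ℝ)).symm (R.mulVec p₂)))
  have h4 : ‖q₁ - q₂ - (((WithLp.equiv 2 (Fin 3 → ℝ)).symm (R.mulVec p₁))
      - ((WithLp.equiv 2 (Fin 3 → ℝ)).symm (R.mulVec p₂)))‖ ≤ 2 * γ := by
    rw [hdiff]
    simp only [add_sub_cancel_left]
    calc ‖b - a‖ ≤ ‖b‖ + ‖a‖ := norm_sub_le _ _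
    _ ≤ 2 * γ := by linarith
  rw [hRp]
  exact h3.trans h4
end

section
/- Let I be the consensus set of a rigid transformation (R, t) with threshold γ, and let a ∈ I. Then I \ {a} is contained in the set of inlier candidates of a, i.e., every i ∈ I with i ≠ a satisfies M(a, i) = 1 where M is the consistency matrix with threshold 2γ on pairwise length differences. -/
open Matrix in
lemma normpres_stmt7 (R : Matrix (Fin 3) (Fin 3) ℝ)
    (hR : R ∈ Matrix.orthogonalGroup (Fin 3) ℝ) (v : Fin 3 → ℝ) :
    ‖(WithLp.equiv 2 (Fin 3 → ℝ)).symm (R.mulVec v)‖ =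
      ‖(WithLp.equiv 2 (Fin 3 → ℝ)).symm v‖ := by
  have hRtR : Rᵀ * R = 1 := by
    have := (Matrix.mem_orthogonalGroup_iff' (Fin 3) ℝ).mp hR
    simpa [Matrix.star_eq_conjTranspose] using this
  have h1 : (R.mulVec v) ⬝ᵥ (R.mulVec v) = v ⬝ᵥ v := by
    rw [Matrix.dotProduct_mulVec, ← Matrix.mulVec_transpose, Matrix.mulVec_mulVec, hRtR,
      Matrix.one_mulVec]
  have hsq : ∀ w : Fin 3 → ℝ,
      ‖(WithLp.equiv 2 (Fin 3 → ℝ)).symm w‖ = Real.sqrt (w ⬝ᵥ w) := by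
    intro w
    rw [EuclideanSpace.norm_eq]
    congr 1
    simp [dotProduct, sq_abs, sq]
  rw [hsq, hsq, h1]

theorem stmt_7 (N : ℕ) (p q : Fin N → EuclideanSpace ℝ (Fin 3))
    (R : Matrix (Fin 3) (Fin 3) ℝ)
    (hR : R ∈ Matrix.orthogonalGroup (Fin 3) ℝ) (hdet : R.det = 1)
    (t : EuclideanSpace ℝ (Fin 3)) (γ : ℝ)
    (I : Finset (Fin N))
    (hI : ∀ i ∈ I, ‖((WithLp.equiv 2 (Fin 3 → ℝ)).symm (R.mulVec (p i))) + t - q i‖ ≤ γ)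
    (a : Fin N) (ha : a ∈ I) :
    ∀ i ∈ I, i ≠ a → |‖q a - q i‖ - ‖p a - p i‖| ≤ 2 * γ := by
  intro i hi _
  set e := (WithLp.equiv 2 (Fin 3 → ℝ)).symm
  have ha' := hI a ha
  have hi' := hI i hi
  have hnp : ‖p a - p i‖ = ‖e (R.mulVec (p a)) - e (R.mulVec (p i))‖ := by
    have : e (R.mulVec (p a)) - e (R.mulVec (p i)) = e (R.mulVec (p a - p i)) := by
      ext j
      simp [e, Matrix.mulVec, dotProduct, mul_sub, Finset.sum_sub_distrib]
    rw [this, normpres_stmt7 R hR]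
    rfl
  rw [hnp]
  have key : q a - q i - (e (R.mulVec (p a)) - e (R.mulVec (p i)))
      = -(e (R.mulVec (p a)) + t - q a) + (e (R.mulVec (p i)) + t - q i) := by
    abel
  calc |‖q a - q i‖ - ‖e (R.mulVec (p a)) - e (R.mulVec (p i))‖|
      ≤ ‖q a - q i - (e (R.mulVec (p a)) - e (R.mulVec (p i)))‖ :=
        abs_norm_sub_norm_le _ _
    _ ≤ ‖e (R.mulVec (p a)) + t - q a‖ + ‖e (R.mulVec (p i)) + t - q i‖ := by
        rw [key]
        exact (norm_add_le _ _).trans (by rw [norm_neg])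
    _ ≤ 2 * γ := by linarith
end

section
/- Let G be the graph on {1, …, N} with an edge between i and j iff |‖q_i − q_j‖ − ‖p_i − p_j‖| ≤ 2γ. Then every consensus set of any rigid transformation (R, t) with inlier threshold γ is a clique in G; hence the maximum consensus size over all rigid transformations is at most the clique number of G. -/
/-!
A rigid motion `x ↦ R x + t` is an isometry. If it moves `p i` and `p j` to within `γ` of `q i`
and `q j`, the quadrilateral inequality `|d(a, b) - d(a', b')| ≤ d(a, a') + d(b, b')` bounds
`|‖q i - q j‖ - ‖p i - p j‖|` by `2γ`, so any two inliers are adjacent in the consistency graph.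
-/

open Matrix

theorem Matrix.norm_toEuclideanCLM_of_mem_unitaryGroup {𝕜 n : Type*} [RCLike 𝕜] [Fintype n]
    [DecidableEq n] {U : Matrix n n 𝕜} (hU : U ∈ unitaryGroup n 𝕜) (x : EuclideanSpace 𝕜 n) :
    ‖toEuclideanCLM (n := n) (𝕜 := 𝕜) U x‖ = ‖x‖ :=
  ContinuousLinearMap.norm_map_of_mem_unitary (Unitary.map_mem _ hU) x

theorem Matrix.isometry_toEuclideanCLM_add_of_mem_unitaryGroup {𝕜 n : Type*} [RCLike 𝕜]
    [Fintype n] [DecidableEq n] {U : Matrix n n 𝕜} (hU : U ∈ unitaryGroup n 𝕜)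
    (t : EuclideanSpace 𝕜 n) :
    Isometry fun x ↦ toEuclideanCLM (n := n) (𝕜 := 𝕜) U x + t :=
  (IsometryEquiv.addRight t).isometry.comp <|
    AddMonoidHomClass.isometry_of_norm _ (norm_toEuclideanCLM_of_mem_unitaryGroup hU)

@[simps]
def consistencyGraph {ι α β : Type*} [PseudoMetricSpace α] [PseudoMetricSpace β]
    (p : ι → α) (q : ι → β) (γ : ℝ) : SimpleGraph ι where
  Adj i j := i ≠ j ∧ |dist (q i) (q j) - dist (p i) (p j)| ≤ 2 * γ
  symm := ⟨fun _ _ h ↦ ⟨h.1.symm, by simpa only [dist_comm] using h.2⟩⟩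
  loopless := ⟨fun _ h ↦ h.1 rfl⟩

theorem abs_dist_sub_dist_le_of_isometry {α β : Type*} [PseudoMetricSpace α]
    [PseudoMetricSpace β] {f : α → β} (hf : Isometry f) {a a' : α} {b b' : β} {γ : ℝ}
    (h : dist (f a) b ≤ γ) (h' : dist (f a') b' ≤ γ) :
    |dist b b' - dist a a'| ≤ 2 * γ := by
  rw [← hf.dist_eq, ← Real.dist_eq]
  calc dist (dist b b') (dist (f a) (f a'))
      ≤ dist b (f a) + dist b' (f a') := dist_dist_dist_le _ _ _ _
    _ ≤ 2 * γ := by rw [dist_comm b, dist_comm b']; linarith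

theorem isClique_consistencyGraph_of_isometry {ι α β : Type*} [PseudoMetricSpace α]
    [PseudoMetricSpace β] {p : ι → α} {q : ι → β} {γ : ℝ} {f : α → β} (hf : Isometry f)
    {s : Set ι} (hs : ∀ i ∈ s, dist (f (p i)) (q i) ≤ γ) :
    (consistencyGraph p q γ).IsClique s :=
  fun _ hi _ hj hij ↦
    (consistencyGraph_adj ..).mpr ⟨hij, abs_dist_sub_dist_le_of_isometry hf (hs _ hi) (hs _ hj)⟩

theorem stmt_9 (N : ℕ) (p q : Fin N → EuclideanSpace ℝ (Fin 3)) (γ : ℝ)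
    (G : SimpleGraph (Fin N))
    (hG : ∀ i j, G.Adj i j ↔ i ≠ j ∧ |‖q i - q j‖ - ‖p i - p j‖| ≤ 2 * γ) :
    ∀ (R : Matrix (Fin 3) (Fin 3) ℝ),
      R ∈ Matrix.orthogonalGroup (Fin 3) ℝ → R.det = 1 →
      ∀ (t : EuclideanSpace ℝ (Fin 3)) (I : Finset (Fin N)),
        (∀ i ∈ I, ‖((WithLp.equiv 2 (Fin 3 → ℝ)).symm (R.mulVec (p i))) + t - q i‖ ≤ γ) →
        G.IsClique ↑I ∧ I.card ≤ G.cliqueNum := by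
  intro R hR _ t I hI
  have hG' : G = consistencyGraph p q γ := by
    ext i j
    simp only [hG, consistencyGraph_adj, dist_eq_norm]
  -- `toEuclideanCLM R x` is by definition `toLp (R *ᵥ ofLp x)`, the form used in `hI`.
  have hclique : G.IsClique ↑I := hG' ▸
    isClique_consistencyGraph_of_isometry (isometry_toEuclideanCLM_add_of_mem_unitaryGroup hR t)
      fun i hi ↦ (dist_eq_norm _ _).trans_le (hI i hi)
  exact ⟨hclique, hclique.card_le_cliqueNum⟩
end

section
/- Let p₁, p₂, p₃ ∈ ℝ³ be affinely independent (not collinear) and suppose q_i = R p_i + t = R' p_i + t' for i = 1, 2, 3 with R, R' ∈ SO(3) and t, t' ∈ ℝ³. Then R = R' and t = t'. -/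
open Matrix

lemma aux_lagrange_17 (x y d : ℝ) (hd : d ≠ 0) :
    (x - 2 * (y / d) * y + (y / d) ^ 2 * d) * d = x * d - y ^ 2 := by
  field_simp
  ring


theorem stmt_17 (p : Fin 3 → EuclideanSpace ℝ (Fin 3))
    (hp : AffineIndependent ℝ p)
    (R R' : Matrix (Fin 3) (Fin 3) ℝ)
    (hR : R ∈ Matrix.orthogonalGroup (Fin 3) ℝ) (hdet : R.det = 1)
    (hR' : R' ∈ Matrix.orthogonalGroup (Fin 3) ℝ) (hdet' : R'.det = 1)
    (t t' : EuclideanSpace ℝ (Fin 3))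
    (h : ∀ i, ((WithLp.equiv 2 (Fin 3 → ℝ)).symm (R.mulVec (p i))) + t =
              ((WithLp.equiv 2 (Fin 3 → ℝ)).symm (R'.mulVec (p i))) + t') :
    R = R' ∧ t = t' := by
  -- orthogonality facts
  have hstar : ∀ (B : Matrix (Fin 3) (Fin 3) ℝ), star B = Bᵀ := fun B => by
    rw [Matrix.star_eq_conjTranspose, Matrix.conjTranspose_eq_transpose_of_trivial]
  have hRtR : Rᵀ * R = 1 := by
    have := (Matrix.mem_orthogonalGroup_iff' (Fin 3) ℝ).mp hR
    exact this
  have hRRt : R * Rᵀ = 1 := by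
    have := (Matrix.mem_orthogonalGroup_iff (Fin 3) ℝ).mp hR
    exact this
  have hR'tR' : R'ᵀ * R' = 1 := by
    have := (Matrix.mem_orthogonalGroup_iff' (Fin 3) ℝ).mp hR'
    exact this
  -- unpack hypotheses to plain function statements
  have h' : ∀ i, R.mulVec (p i) + (WithLp.equiv 2 (Fin 3 → ℝ) t)
      = R'.mulVec (p i) + (WithLp.equiv 2 (Fin 3 → ℝ) t') := by
    intro i; have := congrArg (WithLp.equiv 2 (Fin 3 → ℝ)) (h i); simpa using this
  set u : Fin 3 → ℝ := (WithLp.equiv 2 (Fin 3 → ℝ) (p 1)) - (WithLp.equiv 2 (Fin 3 → ℝ) (p 0)) with hu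
  set v : Fin 3 → ℝ := (WithLp.equiv 2 (Fin 3 → ℝ) (p 2)) - (WithLp.equiv 2 (Fin 3 → ℝ) (p 0)) with hv
  -- linear independence of u, v
  have li0 := (affineIndependent_iff_linearIndependent_vsub ℝ p 0).mp hp
  have einj : Function.Injective
      (![⟨1, by decide⟩, ⟨2, by decide⟩] : Fin 2 → {x : Fin 3 // x ≠ 0}) := by
    decide
  have li1 := li0.comp _ einj
  have li2 : LinearIndependent ℝ ![(p 1 : EuclideanSpace ℝ (Fin 3)) - p 0, p 2 - p 0] := by
    convert li1 using 1
    funext i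
    fin_cases i <;> simp [vsub_eq_sub]
    rfl
  rw [linearIndependent_fin2] at li2
  have hvne : v ≠ 0 := fun hz => li2.1 (by ext j; simpa [hv, sub_eq_zero] using congrFun hz j)
  have hvu : ∀ a : ℝ, a • v ≠ u := fun a ha => li2.2 a (by ext j; simpa [hu, hv] using congrFun ha j)
  -- positivity of the Lagrange quantity
  have hvv_pos : 0 < v ⬝ᵥ v := by
    rcases lt_or_eq_of_le (Finset.sum_nonneg (fun i _ => mul_self_nonneg (v i)) :
      (0:ℝ) ≤ v ⬝ᵥ v) with h1 | h1
    · exact h1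
    · exact absurd (dotProduct_self_eq_zero.mp h1.symm) hvne
  have hlag : 0 < (u ⬝ᵥ u) * (v ⬝ᵥ v) - (u ⬝ᵥ v) ^ 2 := by
    set a : ℝ := (u ⬝ᵥ v) / (v ⬝ᵥ v) with ha
    have hz : u - a • v ≠ 0 := fun hz => hvu a (sub_eq_zero.mp hz).symm
    have hzz : 0 < (u - a • v) ⬝ᵥ (u - a • v) := by
      rcases lt_or_eq_of_le (Finset.sum_nonneg (fun i _ => mul_self_nonneg ((u - a • v) i)) :
        (0:ℝ) ≤ (u - a • v) ⬝ᵥ (u - a • v)) with h1 | h1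
      · exact h1
      · exact absurd (dotProduct_self_eq_zero.mp h1.symm) hz
    have hexp : (u - a • v) ⬝ᵥ (u - a • v)
        = u ⬝ᵥ u - 2 * a * (u ⬝ᵥ v) + a ^ 2 * (v ⬝ᵥ v) := by
      simp [sub_dotProduct, dotProduct_sub, smul_dotProduct,
        dotProduct_smul, dotProduct_comm v u, smul_eq_mul]
      ring
    rw [hexp] at hzz
    have h2 : (v ⬝ᵥ v) ≠ 0 := ne_of_gt hvv_pos
    have hzzz := mul_pos hzz hvv_pos
    rw [ha, aux_lagrange_17 (u ⬝ᵥ u) (u ⬝ᵥ v) (v ⬝ᵥ v) h2] at hzzz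
    exact hzzz
  -- the comparison matrix
  set M : Matrix (Fin 3) (Fin 3) ℝ := Rᵀ * R' with hM
  have hMtM : Mᵀ * M = 1 := by
    rw [hM, Matrix.transpose_mul, Matrix.transpose_transpose, Matrix.mul_assoc,
      ← Matrix.mul_assoc R, hRRt, Matrix.one_mul, hR'tR']
  have hMdet : M.det = 1 := by
    rw [hM, Matrix.det_mul, Matrix.det_transpose, hdet, hdet', one_mul]
  -- M fixes u and v
  have hRu : ∀ x y : Fin 3 → ℝ, R.mulVec x = R'.mulVec x → R.mulVec y = R'.mulVec y →
      R.mulVec (x - y) = R'.mulVec (x - y) := by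
    intro x y hx hy
    rw [Matrix.mulVec_sub, Matrix.mulVec_sub, hx, hy]
  have hRp : ∀ i, R.mulVec (p i) - R'.mulVec (p i)
      = (WithLp.equiv 2 (Fin 3 → ℝ) t') - (WithLp.equiv 2 (Fin 3 → ℝ) t) := by
    intro i
    linear_combination h' i
  have hRuu : R.mulVec u = R'.mulVec u := by
    rw [hu, Matrix.mulVec_sub, Matrix.mulVec_sub]
    show R.mulVec (p 1) - R.mulVec (p 0) = R'.mulVec (p 1) - R'.mulVec (p 0)
    linear_combination hRp 1 - hRp 0
  have hRvv : R.mulVec v = R'.mulVec v := by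
    rw [hv, Matrix.mulVec_sub, Matrix.mulVec_sub]
    show R.mulVec (p 2) - R.mulVec (p 0) = R'.mulVec (p 2) - R'.mulVec (p 0)
    linear_combination hRp 2 - hRp 0
  have hMfix : ∀ x : Fin 3 → ℝ, R.mulVec x = R'.mulVec x → M.mulVec x = x := by
    intro x hx
    rw [hM, ← Matrix.mulVec_mulVec, ← hx, Matrix.mulVec_mulVec, hRtR, Matrix.one_mulVec]
  have hMu : M.mulVec u = u := hMfix u hRuu
  have hMv : M.mulVec v = v := hMfix v hRvv
  -- the cross product vector
  set w : Fin 3 → ℝ := crossProduct u v with hw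
  have hlagw : w ⬝ᵥ w = (u ⬝ᵥ u) * (v ⬝ᵥ v) - (u ⬝ᵥ v) ^ 2 := by
    simp [hw, cross_apply, dotProduct, Fin.sum_univ_three]
    ring
  have hww_pos : 0 < w ⬝ᵥ w := by rw [hlagw]; exact hlag
  set A : Matrix (Fin 3) (Fin 3) ℝ := Matrix.of ![u, v, w] with hA
  have hdetA : A.det = w ⬝ᵥ w := by
    simp [hA, Matrix.det_fin_three, hw, cross_apply, dotProduct, Fin.sum_univ_three]
    ring
  -- key identity
  have hkey : A * Mᵀ = Matrix.of ![M.mulVec u, M.mulVec v, M.mulVec w] := by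
    ext i j
    fin_cases i <;>
      simp [hA, Matrix.mul_apply, Matrix.mulVec, dotProduct, mul_comm]
  have hdet2 : ∀ x : Fin 3 → ℝ, (Matrix.of ![u, v, x]).det = x ⬝ᵥ w := by
    intro x
    simp [Matrix.det_fin_three, hw, cross_apply, dotProduct, Fin.sum_univ_three]
    ring
  have hMw_dot : M.mulVec w ⬝ᵥ w = w ⬝ᵥ w := by
    have h1 : (A * Mᵀ).det = A.det := by
      rw [Matrix.det_mul, Matrix.det_transpose, hMdet, mul_one]
    rw [hkey, hMu, hMv, hdet2] at h1
    rw [h1, hdetA]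
  have hMw_norm : M.mulVec w ⬝ᵥ M.mulVec w = w ⬝ᵥ w := by
    calc M.mulVec w ⬝ᵥ M.mulVec w
        = Matrix.vecMul (M.mulVec w) M ⬝ᵥ w := Matrix.dotProduct_mulVec _ M w
      _ = Matrix.vecMul w (Mᵀ * M) ⬝ᵥ w := by rw [Matrix.vecMul_mulVec]
      _ = w ⬝ᵥ w := by rw [hMtM, Matrix.vecMul_one]
  have hMw : M.mulVec w = w := by
    have hz : (M.mulVec w - w) ⬝ᵥ (M.mulVec w - w) = 0 := by
      rw [sub_dotProduct, dotProduct_sub, dotProduct_sub,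
        hMw_norm, hMw_dot, dotProduct_comm w (M.mulVec w), hMw_dot]
      ring
    have := dotProduct_self_eq_zero.mp hz
    rwa [sub_eq_zero] at this
  -- conclude M = 1
  have hAunit : IsUnit A.det := by
    rw [hdetA]; exact isUnit_iff_ne_zero.mpr (ne_of_gt hww_pos)
  have hAMA : A * Mᵀ = A := by
    rw [hkey, hMu, hMv, hMw, hA]
  have hMt1 : Mᵀ = 1 := by
    calc Mᵀ = (A⁻¹ * A) * Mᵀ := by rw [Matrix.nonsing_inv_mul A hAunit, Matrix.one_mul]
    _ = A⁻¹ * (A * Mᵀ) := by rw [Matrix.mul_assoc]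
    _ = A⁻¹ * A := by rw [hAMA]
    _ = 1 := Matrix.nonsing_inv_mul A hAunit
  have hM1 : M = 1 := by
    have := congrArg Matrix.transpose hMt1
    rwa [Matrix.transpose_transpose, Matrix.transpose_one] at this
  have hRR' : R = R' := by
    have : R * M = R * 1 := by rw [hM1]
    rw [hM, ← Matrix.mul_assoc, hRRt, Matrix.one_mul, Matrix.mul_one] at this
    exact this.symm
  refine ⟨hRR', ?_⟩
  have := h 0
  rw [hRR'] at this
  exact add_left_cancel this
end
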